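/- Let Â, B̂, Ĉ be in SL(2,ℂ) with ĈB̂Â = I, and let A, B, C be the 3×3 block-diagonal matrices A = diag(Â, 1), B = diag(B̂, 1), C = diag(Ĉ, 1) in SL(3,ℂ) (the 2×2 block in the upper left and the scalar 1 in the lower right). Then σ₊(A,B,C) = σ₋(A,B,C) = 3 − tr(A) − tr(B) − tr(C). -/

import Mathlib

/-!
For `X ∈ SL(2)` Cayley–Hamilton gives `X⁻¹ = tr X • 1 - X`, hence `tr X⁻¹ = tr X` and
`tr (X⁻¹ Y) = tr X tr Y - tr (X Y)`. The embedding `M ↦ diag(M, 1)` is multiplicative and adds `1`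
to traces, so both shape invariants of the embedded triple equal `-(tr(ÂB̂) + tr Â + tr B̂)`;
finally `tr Ĉ = tr (B̂Â)⁻¹ = tr (ÂB̂)`.
-/

open Matrix

/-- The block-diagonal embedding `M ↦ diag(M, 1)` of 2×2 matrices into 3×3 matrices. -/
def embed3 (M : Matrix (Fin 2) (Fin 2) ℂ) : Matrix (Fin 3) (Fin 3) ℂ :=
  !![M 0 0, M 0 1, 0;
     M 1 0, M 1 1, 0;
     0, 0, 1]

namespace Matrix

variable {R : Type*} [CommRing R]

theorem adjugate_fin_two_eq_trace_smul_one_sub (X : Matrix (Fin 2) (Fin 2) R) :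
    adjugate X = X.trace • 1 - X := by
  ext i j
  fin_cases i <;> fin_cases j <;> simp [adjugate_fin_two, trace_fin_two]

theorem inv_fin_two_of_det_eq_one {X : Matrix (Fin 2) (Fin 2) R} (hX : X.det = 1) :
    X⁻¹ = X.trace • 1 - X := by
  rw [inv_def, hX, Ring.inverse_one, one_smul, adjugate_fin_two_eq_trace_smul_one_sub]

theorem trace_inv_fin_two_of_det_eq_one {X : Matrix (Fin 2) (Fin 2) R} (hX : X.det = 1) :
    X⁻¹.trace = X.trace := by
  rw [inv_fin_two_of_det_eq_one hX, trace_sub, trace_smul, trace_one, Fintype.card_fin,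
    smul_eq_mul]
  push_cast
  ring

theorem trace_inv_mul_fin_two_of_det_eq_one {X : Matrix (Fin 2) (Fin 2) R} (hX : X.det = 1)
    (Y : Matrix (Fin 2) (Fin 2) R) :
    (X⁻¹ * Y).trace = X.trace * Y.trace - (X * Y).trace := by
  rw [inv_fin_two_of_det_eq_one hX, sub_mul, smul_mul_assoc, one_mul, trace_sub, trace_smul,
    smul_eq_mul]

end Matrix

theorem embed3_one : embed3 1 = 1 := by
  ext i j
  fin_cases i <;> fin_cases j <;> rfl

theorem embed3_mul (M N : Matrix (Fin 2) (Fin 2) ℂ) :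
    embed3 (M * N) = embed3 M * embed3 N := by
  ext i j
  fin_cases i <;> fin_cases j <;> simp [embed3, mul_apply, Fin.sum_univ_three, Fin.sum_univ_two]

theorem inv_embed3 {M : Matrix (Fin 2) (Fin 2) ℂ} (hM : IsUnit M.det) :
    (embed3 M)⁻¹ = embed3 M⁻¹ :=
  inv_eq_left_inv <| by rw [← embed3_mul, nonsing_inv_mul M hM, embed3_one]

theorem trace_embed3 (M : Matrix (Fin 2) (Fin 2) ℂ) : (embed3 M).trace = M.trace + 1 := by
  simp [embed3, trace_fin_three, trace_fin_two]

/-- `σ₊(A, B, C) = shapeInvariant A B` and `σ₋(A, B, C) = shapeInvariant B A`. -/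
noncomputable def shapeInvariant {n R : Type*} [Fintype n] [DecidableEq n] [CommRing R] (A B : Matrix n n R) :
    R :=
  (A⁻¹ * B).trace - A⁻¹.trace * B.trace

theorem shapeInvariant_embed3 {X : Matrix (Fin 2) (Fin 2) ℂ} (hX : X.det = 1)
    (Y : Matrix (Fin 2) (Fin 2) ℂ) :
    shapeInvariant (embed3 X) (embed3 Y) = -((X * Y).trace + X.trace + Y.trace) := by
  rw [shapeInvariant, inv_embed3 (by simp [hX]), ← embed3_mul, trace_embed3, trace_embed3,
    trace_embed3, trace_inv_mul_fin_two_of_det_eq_one hX, trace_inv_fin_two_of_det_eq_one hX]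
  ring

theorem shape_invariants_of_reducible_block_diagonal_general
    (Ah Bh Ch : Matrix (Fin 2) (Fin 2) ℂ)
    (hA : Ah.det = 1) (hB : Bh.det = 1)
    (h : Ch * Bh * Ah = 1) :
    ((embed3 Ah)⁻¹ * embed3 Bh).trace - ((embed3 Ah)⁻¹).trace * (embed3 Bh).trace
      = ((embed3 Bh)⁻¹ * embed3 Ah).trace - ((embed3 Bh)⁻¹).trace * (embed3 Ah).trace ∧
    ((embed3 Ah)⁻¹ * embed3 Bh).trace - ((embed3 Ah)⁻¹).trace * (embed3 Bh).trace
      = 3 - (embed3 Ah).trace - (embed3 Bh).trace - (embed3 Ch).trace := by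
  have hCh : Ch = (Bh * Ah)⁻¹ := (inv_eq_left_inv (by rw [← mul_assoc, h])).symm
  have trace_Ch : Ch.trace = (Ah * Bh).trace := by
    rw [hCh, trace_inv_fin_two_of_det_eq_one (by rw [det_mul, hA, hB, one_mul]), trace_mul_comm]
  change shapeInvariant (embed3 Ah) (embed3 Bh) = shapeInvariant (embed3 Bh) (embed3 Ah) ∧
    shapeInvariant (embed3 Ah) (embed3 Bh) = _
  rw [shapeInvariant_embed3 hA, shapeInvariant_embed3 hB, trace_embed3, trace_embed3,
    trace_embed3, trace_Ch, trace_mul_comm Bh Ah]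
  constructor <;> ring

theorem shape_invariants_of_reducible_block_diagonal
    (Ah Bh Ch : Matrix (Fin 2) (Fin 2) ℂ)
    (hA : Ah.det = 1) (hB : Bh.det = 1) (hC : Ch.det = 1)
    (h : Ch * Bh * Ah = 1) :
    ((embed3 Ah)⁻¹ * embed3 Bh).trace - ((embed3 Ah)⁻¹).trace * (embed3 Bh).trace
      = ((embed3 Bh)⁻¹ * embed3 Ah).trace - ((embed3 Bh)⁻¹).trace * (embed3 Ah).trace ∧
    ((embed3 Ah)⁻¹ * embed3 Bh).trace - ((embed3 Ah)⁻¹).trace * (embed3 Bh).trace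
      = 3 - (embed3 Ah).trace - (embed3 Bh).trace - (embed3 Ch).trace :=
  shape_invariants_of_reducible_block_diagonal_general Ah Bh Ch hA hB h
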